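/- arXiv:2003.09239 — 2 statements merged into one kernel-verified Lean document; each statement's English description precedes it below -/
import Mathlib

section
/- Let σ > 0, s ≥ 0 and q ≥ 1. Then there exists a constant C = C(σ,s,q) > 0 such that for all t > 0: e^{−t/2} ‖ |ξ|^s L_σ(t,ξ) ‖_{L^q(\{|ξ| < 2^{−2/σ}\})} ≤ C ‖ |ξ|^s e^{−t|ξ|^σ} ‖_{L^q(\{|ξ| < 2^{−2/σ}\})}; moreover this quantity is bounded by C ‖ |ξ|^s ‖_{L^q(\{|ξ| < 2^{−2/σ}\})} if t ≤ 1 and by C t^{−s/σ − n/(σq)} ‖ |ξ|^s e^{−|ξ|^σ} ‖_{L^q(ℝⁿ)} if t ≥ 1. -/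
open MeasureTheory Real Filter
open scoped ENNReal

noncomputable section

abbrev Rn (n : ℕ) := EuclideanSpace ℝ (Fin n)

/-- The multiplier `L_σ(t,ξ)` (on the low-frequency region `|ξ| < 2^{-2/σ}` it is
`sinh(t√(1/4-|ξ|^σ))/√(1/4-|ξ|^σ)`). -/
def Lsig {n : ℕ} (σ t : ℝ) (ξ : Rn n) : ℝ :=
  if ‖ξ‖ < (2:ℝ) ^ (-(2/σ)) then
    Real.sinh (t * Real.sqrt (1/4 - ‖ξ‖ ^ σ)) / Real.sqrt (1/4 - ‖ξ‖ ^ σ)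
  else
    Real.sin (t * Real.sqrt (‖ξ‖ ^ σ - 1/4)) / Real.sqrt (‖ξ‖ ^ σ - 1/4)

/-- Low frequency region `{|ξ| < 2^{-2/σ}}`. -/
def lowFreq (n : ℕ) (σ : ℝ) : Set (Rn n) := {ξ : Rn n | ‖ξ‖ < (2:ℝ) ^ (-(2/σ))}

/-!
On the low-frequency region put `m = √(1/4 - |ξ|^σ) ∈ (0, 1/2]`. The identity
`1/2 - m = (1/4 - m²) + (1/2 - m)²` gives
`e^{-t/2} sinh(tm)/m = e^{-t|ξ|^σ} e^{-t(1/2 - m)²} · (sinh(tm)/(m e^{tm}))`, and the last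
factor is at most `1/(2m) ≤ 2` when `m ≥ 1/4` and at most `t` when `m < 1/4`, where the gap
`(1/2 - m)² ≥ 1/16` absorbs it: `t e^{-t/16} ≤ 16`. So the multiplier is bounded pointwise by
`16 e^{-t|ξ|^σ}`. For `t ≤ 1` drop the exponential; for `t ≥ 1` enlarge the region to `ℝⁿ` and
substitute `ξ ↦ t^{1/σ} ξ`.
-/

theorem sinh_le_exp_div_two (x : ℝ) : sinh x ≤ exp x / 2 := by
  rw [sinh_eq]
  linarith [exp_pos (-x)]

theorem sinh_le_mul_exp {x : ℝ} (hx : 0 ≤ x) : sinh x ≤ x * exp x := by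
  have hprod : exp (-x) * exp x = 1 := by rw [← exp_add, neg_add_cancel, exp_zero]
  rw [sinh_eq]
  nlinarith [add_one_le_exp (-x), one_le_exp hx]

theorem exp_neg_half_mul_sinh_div_le {t m : ℝ} (ht : 0 ≤ t) (hm0 : 0 < m) (hm : m ≤ 1 / 2) :
    exp (-(t / 2)) * (sinh (t * m) / m) ≤ 16 * exp (-(t * (1 / 4 - m ^ 2))) := by
  have hsplit : exp (-(t / 2)) * exp (t * m) =
      exp (-(t * (1 / 4 - m ^ 2))) * exp (-(t * (1 / 2 - m) ^ 2)) := by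
    rw [← exp_add, ← exp_add]; ring_nf
  have hE := exp_pos (-(t * (1 / 4 - m ^ 2)))
  rcases le_or_gt (1 / 4) m with hm' | hm'
  · have hsinh : sinh (t * m) / m ≤ 2 * exp (t * m) := by
      rw [div_le_iff₀ hm0]
      nlinarith [sinh_le_exp_div_two (t * m), exp_pos (t * m)]
    have hgap : exp (-(t * (1 / 2 - m) ^ 2)) ≤ 1 := exp_le_one_iff.2 (by nlinarith)
    calc exp (-(t / 2)) * (sinh (t * m) / m)
        ≤ 2 * (exp (-(t / 2)) * exp (t * m)) := by nlinarith [exp_pos (-(t / 2))]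
      _ ≤ 16 * exp (-(t * (1 / 4 - m ^ 2))) := by rw [hsplit]; nlinarith
  · have hsinh : sinh (t * m) / m ≤ t * exp (t * m) := by
      rw [div_le_iff₀ hm0]
      linarith [sinh_le_mul_exp (mul_nonneg ht hm0.le)]
    have hgap : t * exp (-(t * (1 / 2 - m) ^ 2)) ≤ 16 := by
      have hsq : (1 : ℝ) / 16 ≤ (1 / 2 - m) ^ 2 := by nlinarith
      have h16 : exp (-(t * (1 / 2 - m) ^ 2)) ≤ exp (-(t / 16)) :=
        exp_le_exp.2 (by nlinarith [mul_le_mul_of_nonneg_left hsq ht])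
      have := mul_exp_neg_le_exp_neg_one (t / 16)
      have : exp (-1) ≤ 1 := exp_le_one_iff.2 (by norm_num)
      nlinarith
    calc exp (-(t / 2)) * (sinh (t * m) / m)
        ≤ t * (exp (-(t / 2)) * exp (t * m)) := by nlinarith [exp_pos (-(t / 2))]
      _ ≤ 16 * exp (-(t * (1 / 4 - m ^ 2))) := by rw [hsplit]; nlinarith

theorem norm_rpow_lt_quarter_of_mem_lowFreq {n : ℕ} {σ : ℝ} (hσ : 0 < σ) {ξ : Rn n}
    (hξ : ξ ∈ lowFreq n σ) : ‖ξ‖ ^ σ < 1 / 4 := by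
  have h := rpow_lt_rpow (norm_nonneg ξ) hξ hσ
  rwa [← rpow_mul zero_le_two, show -(2 / σ) * σ = -2 by field_simp, rpow_neg zero_le_two,
    rpow_two, show (2 : ℝ) ^ 2 = 4 by norm_num, ← one_div] at h

theorem Lsig_of_mem_lowFreq {n : ℕ} {σ : ℝ} (t : ℝ) {ξ : Rn n} (hξ : ξ ∈ lowFreq n σ) :
    Lsig σ t ξ = sinh (t * √(1 / 4 - ‖ξ‖ ^ σ)) / √(1 / 4 - ‖ξ‖ ^ σ) :=
  if_pos hξ

theorem Lsig_nonneg_of_mem_lowFreq {n : ℕ} {σ t : ℝ} (ht : 0 ≤ t) {ξ : Rn n}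
    (hξ : ξ ∈ lowFreq n σ) : 0 ≤ Lsig σ t ξ := by
  rw [Lsig_of_mem_lowFreq t hξ]
  exact div_nonneg (sinh_nonneg_iff.2 (by positivity)) (sqrt_nonneg _)

theorem exp_neg_half_mul_Lsig_le {n : ℕ} {σ t : ℝ} (hσ : 0 < σ) (ht : 0 ≤ t) {ξ : Rn n}
    (hξ : ξ ∈ lowFreq n σ) : exp (-(t / 2)) * Lsig σ t ξ ≤ 16 * exp (-t * ‖ξ‖ ^ σ) := by
  have hr := norm_rpow_lt_quarter_of_mem_lowFreq hσ hξ
  have hm0 : 0 < √(1 / 4 - ‖ξ‖ ^ σ) := sqrt_pos.2 (by linarith)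
  have hm2 : √(1 / 4 - ‖ξ‖ ^ σ) ^ 2 = 1 / 4 - ‖ξ‖ ^ σ := sq_sqrt (by linarith)
  have hm : √(1 / 4 - ‖ξ‖ ^ σ) ≤ 1 / 2 := by
    nlinarith [rpow_nonneg (norm_nonneg ξ) σ]
  have key := exp_neg_half_mul_sinh_div_le ht hm0 hm
  rwa [hm2, sub_sub_cancel, ← neg_mul, ← Lsig_of_mem_lowFreq t hξ] at key

theorem ofReal_mul_eLpNorm_le_of_ae_le {α : Type*} [MeasurableSpace α] {μ : Measure α}
    {p : ℝ≥0∞} {f g : α → ℝ} {a b : ℝ} (ha : 0 ≤ a) (hb : 0 ≤ b)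
    (h : ∀ᵐ x ∂μ, a * ‖f x‖ ≤ b * ‖g x‖) :
    ENNReal.ofReal a * eLpNorm f p μ ≤ ENNReal.ofReal b * eLpNorm g p μ := by
  rw [← enorm_eq_ofReal ha, ← enorm_eq_ofReal hb, ← eLpNorm_const_smul, ← eLpNorm_const_smul]
  refine eLpNorm_mono_ae (h.mono fun x hx => ?_)
  simpa only [Pi.smul_apply, norm_smul, norm_of_nonneg ha, norm_of_nonneg hb] using hx

theorem exp_neg_half_mul_eLpNorm_Lsig_le (n : ℕ) {σ t : ℝ} (hσ : 0 < σ) (ht : 0 ≤ t)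
    (s : ℝ) (p : ℝ≥0∞) :
    ENNReal.ofReal (exp (-(t / 2))) *
        eLpNorm (fun ξ : Rn n => ‖ξ‖ ^ s * Lsig σ t ξ) p (volume.restrict (lowFreq n σ)) ≤
      ENNReal.ofReal 16 *
        eLpNorm (fun ξ : Rn n => ‖ξ‖ ^ s * exp (-t * ‖ξ‖ ^ σ)) p
          (volume.restrict (lowFreq n σ)) := by
  have hlow : MeasurableSet (lowFreq n σ) := measurableSet_lt measurable_norm measurable_const
  refine ofReal_mul_eLpNorm_le_of_ae_le (exp_pos _).le (by norm_num) ?_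
  filter_upwards [ae_restrict_mem hlow] with ξ hξ
  have hs := rpow_nonneg (norm_nonneg ξ) s
  rw [norm_mul, norm_mul, norm_of_nonneg hs, norm_of_nonneg (Lsig_nonneg_of_mem_lowFreq ht hξ),
    norm_of_nonneg (exp_pos _).le, mul_left_comm, mul_left_comm 16]
  exact mul_le_mul_of_nonneg_left (exp_neg_half_mul_Lsig_le hσ ht hξ) hs

theorem norm_rpow_mul_exp_neg_mul_rpow_eq {E : Type*} [SeminormedAddCommGroup E] [NormedSpace ℝ E]
    {σ t : ℝ} (hσ : σ ≠ 0) (ht : 0 < t) (s : ℝ) (ξ : E) :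
    ‖ξ‖ ^ s * exp (-t * ‖ξ‖ ^ σ) =
      t ^ (-(s / σ)) * (‖t ^ (1 / σ) • ξ‖ ^ s * exp (-‖t ^ (1 / σ) • ξ‖ ^ σ)) := by
  have hpow (a : ℝ) : ‖t ^ (1 / σ) • ξ‖ ^ a = t ^ (a / σ) * ‖ξ‖ ^ a := by
    rw [norm_smul, norm_of_nonneg (rpow_nonneg ht.le _), mul_rpow (rpow_nonneg ht.le _)
      (norm_nonneg ξ), ← rpow_mul ht.le, one_div_mul_eq_div]
  rw [hpow, hpow, div_self hσ, rpow_one, ← mul_assoc, ← mul_assoc, ← rpow_add ht,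
    neg_add_cancel, rpow_zero, one_mul, neg_mul]

section Scaling

variable {E : Type*} [NormedAddCommGroup E] [NormedSpace ℝ E] [MeasurableSpace E] [BorelSpace E]
  [FiniteDimensional ℝ E] (μ : Measure E) [μ.IsAddHaarMeasure]

theorem eLpNorm_comp_smul {F : Type*} [NormedAddCommGroup F] (f : E → F) {R : ℝ} (hR : R ≠ 0)
    {p : ℝ≥0∞} (hp : p ≠ ⊤) :
    eLpNorm (fun x => f (R • x)) p μ =
      ENNReal.ofReal |(R ^ Module.finrank ℝ E)⁻¹| ^ (1 / p).toReal * eLpNorm f p μ := by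
  rw [← smul_eq_mul, ← eLpNorm_smul_measure_of_ne_top hp, ← Measure.map_addHaar_smul μ hR,
    (measurableEmbedding_const_smul₀ hR).eLpNorm_map_measure]
  rfl

theorem eLpNorm_rpow_mul_exp_neg_mul_rpow {σ t q : ℝ} (hσ : σ ≠ 0) (ht : 0 < t) (hq : 0 < q)
    (s : ℝ) :
    eLpNorm (fun ξ : E => ‖ξ‖ ^ s * exp (-t * ‖ξ‖ ^ σ)) (ENNReal.ofReal q) μ =
      ENNReal.ofReal (t ^ (-(s / σ) - Module.finrank ℝ E / (σ * q))) *
        eLpNorm (fun ξ : E => ‖ξ‖ ^ s * exp (-‖ξ‖ ^ σ)) (ENNReal.ofReal q) μ := by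
  have hc : t ^ (1 / σ) ≠ 0 := (rpow_pos_of_pos ht _).ne'
  simp_rw [norm_rpow_mul_exp_neg_mul_rpow_eq hσ ht s]
  refine (eLpNorm_const_smul (t ^ (-(s / σ)))
    (fun ξ : E => ‖t ^ (1 / σ) • ξ‖ ^ s * exp (-‖t ^ (1 / σ) • ξ‖ ^ σ)) _ μ).trans ?_
  rw [eLpNorm_comp_smul μ (fun η : E => ‖η‖ ^ s * exp (-‖η‖ ^ σ)) hc ENNReal.ofReal_ne_top,
    ← mul_assoc, enorm_eq_ofReal (rpow_nonneg ht.le _),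
    ENNReal.ofReal_rpow_of_nonneg (abs_nonneg _) ENNReal.toReal_nonneg,
    ← ENNReal.ofReal_mul (rpow_nonneg ht.le _)]
  congr 2
  rw [one_div (ENNReal.ofReal q), ENNReal.toReal_inv, ENNReal.toReal_ofReal hq.le,
    abs_of_nonneg (by positivity), ← rpow_natCast, ← rpow_mul ht.le, ← rpow_neg ht.le,
    ← rpow_mul ht.le, ← rpow_add ht]
  congr 1
  field_simp
  ring

end Scaling

theorem low_frequency_multiplier_Lq_estimate_general
    (n : ℕ) (σ : ℝ) (hσ : 0 < σ) (s : ℝ) (q : ℝ) (hq : 1 ≤ q) :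
    ∃ C : ℝ, 0 < C ∧ ∀ t : ℝ, 0 < t →
      (ENNReal.ofReal (Real.exp (-(t/2))) *
          eLpNorm (fun ξ : Rn n => ‖ξ‖ ^ s * Lsig σ t ξ) (ENNReal.ofReal q)
            (volume.restrict (lowFreq n σ)) ≤
        ENNReal.ofReal C *
          eLpNorm (fun ξ : Rn n => ‖ξ‖ ^ s * Real.exp (-t * ‖ξ‖ ^ σ)) (ENNReal.ofReal q)
            (volume.restrict (lowFreq n σ))) ∧
      (t ≤ 1 →
        ENNReal.ofReal (Real.exp (-(t/2))) *
            eLpNorm (fun ξ : Rn n => ‖ξ‖ ^ s * Lsig σ t ξ) (ENNReal.ofReal q)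
              (volume.restrict (lowFreq n σ)) ≤
          ENNReal.ofReal C *
            eLpNorm (fun ξ : Rn n => ‖ξ‖ ^ s) (ENNReal.ofReal q)
              (volume.restrict (lowFreq n σ))) ∧
      (1 ≤ t →
        ENNReal.ofReal (Real.exp (-(t/2))) *
            eLpNorm (fun ξ : Rn n => ‖ξ‖ ^ s * Lsig σ t ξ) (ENNReal.ofReal q)
              (volume.restrict (lowFreq n σ)) ≤
          ENNReal.ofReal (C * t ^ (-(s/σ) - n/(σ*q))) *
            eLpNorm (fun ξ : Rn n => ‖ξ‖ ^ s * Real.exp (-‖ξ‖ ^ σ)) (ENNReal.ofReal q)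
              volume) := by
  refine ⟨16, by norm_num, fun t ht => ?_⟩
  have hheat := exp_neg_half_mul_eLpNorm_Lsig_le n hσ ht.le s (ENNReal.ofReal q)
  refine ⟨hheat, fun _ => hheat.trans ?_, fun _ => hheat.trans ?_⟩
  · refine mul_le_mul_right (eLpNorm_mono fun ξ => ?_) _
    rw [norm_mul, norm_of_nonneg (exp_pos _).le]
    exact mul_le_of_le_one_right (norm_nonneg _) (exp_le_one_iff.2
      (mul_nonpos_of_nonpos_of_nonneg (neg_nonpos.2 ht.le) (rpow_nonneg (norm_nonneg ξ) σ)))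
  · calc _ ≤ ENNReal.ofReal 16 *
          eLpNorm (fun ξ : Rn n => ‖ξ‖ ^ s * exp (-t * ‖ξ‖ ^ σ)) (ENNReal.ofReal q) volume :=
        mul_le_mul_right (eLpNorm_mono_measure _ Measure.restrict_le_self) _
      _ = _ := by
        rw [eLpNorm_rpow_mul_exp_neg_mul_rpow volume hσ.ne' ht (by linarith), ← mul_assoc,
          ← ENNReal.ofReal_mul (by norm_num), finrank_euclideanSpace_fin]

/-- Estimate (3.9): `e^{-t/2} ‖|ξ|^s L_σ(t,ξ)‖_{L^q(|ξ|<2^{-2/σ})}` is dominated by the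
corresponding norm of the heat multiplier, with the stated decay for `t ≤ 1` and `t ≥ 1`. -/
theorem low_frequency_multiplier_Lq_estimate
    (n : ℕ) (σ : ℝ) (hσ : 0 < σ) (s : ℝ) (hs : 0 ≤ s) (q : ℝ) (hq : 1 ≤ q) :
    ∃ C : ℝ, 0 < C ∧ ∀ t : ℝ, 0 < t →
      (ENNReal.ofReal (Real.exp (-(t/2))) *
          eLpNorm (fun ξ : Rn n => ‖ξ‖ ^ s * Lsig σ t ξ) (ENNReal.ofReal q)
            (volume.restrict (lowFreq n σ)) ≤
        ENNReal.ofReal C *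
          eLpNorm (fun ξ : Rn n => ‖ξ‖ ^ s * Real.exp (-t * ‖ξ‖ ^ σ)) (ENNReal.ofReal q)
            (volume.restrict (lowFreq n σ))) ∧
      (t ≤ 1 →
        ENNReal.ofReal (Real.exp (-(t/2))) *
            eLpNorm (fun ξ : Rn n => ‖ξ‖ ^ s * Lsig σ t ξ) (ENNReal.ofReal q)
              (volume.restrict (lowFreq n σ)) ≤
          ENNReal.ofReal C *
            eLpNorm (fun ξ : Rn n => ‖ξ‖ ^ s) (ENNReal.ofReal q)
              (volume.restrict (lowFreq n σ))) ∧
      (1 ≤ t →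
        ENNReal.ofReal (Real.exp (-(t/2))) *
            eLpNorm (fun ξ : Rn n => ‖ξ‖ ^ s * Lsig σ t ξ) (ENNReal.ofReal q)
              (volume.restrict (lowFreq n σ)) ≤
          ENNReal.ofReal (C * t ^ (-(s/σ) - n/(σ*q))) *
            eLpNorm (fun ξ : Rn n => ‖ξ‖ ^ s * Real.exp (-‖ξ‖ ^ σ)) (ENNReal.ofReal q)
              volume) :=
  low_frequency_multiplier_Lq_estimate_general n σ hσ s q hq

end
end

section
/- For every integer k ≥ 0, the identity d^k/dϑ^k ( sinh(t√ϑ)/(t√ϑ) ) = 2^{−k} t^{2k} ∫_{θ ∈ [0,1]^{k+1}} ( ∏_{j=0}^{k} θ_j^{2(k−j)} ) cosh( t√ϑ ∏_{j=0}^{k} θ_j ) dθ holds for all ϑ ≥ 0 and t > 0 (with sinh(t√ϑ)/(t√ϑ) understood as its continuous extension, equal to 1, at ϑ = 0); consequently, for every ϑ ≥ 0, 0 < t < 1, and integer k ≥ 0, the estimate | d^k/dϑ^k ( sinh(t√ϑ)/(t√ϑ) ) | ≤ 2^{1−k} e^{t√ϑ} holds. -/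
open MeasureTheory Real Filter
open scoped ENNReal

noncomputable section

def sinhc (t : ℝ) (ϑ : ℝ) : ℝ :=
  if ϑ = 0 then 1 else Real.sinh (t * Real.sqrt ϑ) / (t * Real.sqrt ϑ)

/-! Since `sinh a / a = ∫₀¹ cosh (a s) ds`, the chain rule gives
`d/dϑ cosh (c √ϑ) = (c² / 2) ∫₀¹ cosh (c √ϑ s) ds`. Differentiating under the integral sign, the
`k`-th cube integral `F_k(ϑ) = ∫_{[0,1]^{k+1}} w_k(θ) cosh (t √ϑ ∏ θ_j) dθ` therefore has derivative
`(t² / 2) F_{k+1}(ϑ)`: the new variable `s` becomes the last coordinate of the cube, and the factor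
`(t ∏ θ_j)²` pulled out by the chain rule raises every exponent of the weight by two. At `ϑ = 0` the
one-sided derivative exists because `F_{k+1}` is continuous. The bound follows from
`0 ≤ θ_j ≤ 1` and `cosh ≤ exp` on `[0, ∞)`. -/

lemma iteratedDerivWithin_eq_pow_smul_of_hasDerivWithinAt {𝕜 E : Type*}
    [NontriviallyNormedField 𝕜] [NormedAddCommGroup E] [NormedSpace 𝕜 E]
    {F : ℕ → 𝕜 → E} {s : Set 𝕜} (hs : UniqueDiffOn 𝕜 s) (a : 𝕜)
    (hF : ∀ k, ∀ x ∈ s, HasDerivWithinAt (F k) (a • F (k + 1) x) s x) (k : ℕ) :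
    ∀ x ∈ s, iteratedDerivWithin k (F 0) s x = a ^ k • F k x := by
  induction k with
  | zero => simp
  | succ k ih =>
    intro x hx
    rw [iteratedDerivWithin_succ, derivWithin_congr ih (ih x hx), pow_succ, ← smul_smul]
    exact ((hF k x hx).const_smul (a ^ k)).derivWithin (hs x hx)

def unitCube (n : ℕ) : Set (Fin n → ℝ) := Set.univ.pi fun _ => Set.Icc 0 1

lemma isCompact_unitCube (n : ℕ) : IsCompact (unitCube n) :=
  isCompact_univ_pi fun _ => isCompact_Icc

lemma measurableSet_unitCube (n : ℕ) : MeasurableSet (unitCube n) :=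
  MeasurableSet.univ_pi fun _ => measurableSet_Icc

lemma Continuous.integrableOn_unitCube {E : Type*} [NormedAddCommGroup E] {n : ℕ}
    {f : (Fin n → ℝ) → E} (hf : Continuous f) : IntegrableOn f (unitCube n) :=
  hf.continuousOn.integrableOn_compact (isCompact_unitCube n)

lemma volume_restrict_unitCube (n : ℕ) :
    volume.restrict (unitCube n) = Measure.pi fun _ => volume.restrict (Set.Icc (0:ℝ) 1) := by
  rw [unitCube, volume_pi, Measure.restrict_pi_pi]

instance (n : ℕ) : IsProbabilityMeasure (volume.restrict (unitCube n)) := by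
  rw [volume_restrict_unitCube]
  have : IsProbabilityMeasure (volume.restrict (Set.Icc (0:ℝ) 1)) := ⟨by simp⟩
  infer_instance

lemma abs_prod_pow_le_one {n : ℕ} {θ : Fin n → ℝ} (hθ : θ ∈ unitCube n) (e : Fin n → ℕ) :
    |∏ j, θ j ^ e j| ≤ 1 := by
  rw [Finset.abs_prod]
  refine Finset.prod_le_one (fun _ _ => abs_nonneg _) fun j _ => ?_
  have hj := hθ j (Set.mem_univ j)
  rw [abs_pow, abs_of_nonneg hj.1]
  exact pow_le_one₀ hj.1 hj.2

lemma abs_prod_le_one {n : ℕ} {θ : Fin n → ℝ} (hθ : θ ∈ unitCube n) : |∏ j, θ j| ≤ 1 := by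
  simpa using abs_prod_pow_le_one hθ 1

lemma integral_unitCube_succ {E : Type*} [NormedAddCommGroup E] [NormedSpace ℝ E] {n : ℕ}
    {f : (Fin (n + 1) → ℝ) → E} (hf : IntegrableOn f (unitCube (n + 1))) :
    ∫ θ in unitCube (n + 1), f θ = ∫ θ in unitCube n, ∫ s in (0:ℝ)..1, f (Fin.snoc θ s) := by
  rw [IntegrableOn, volume_restrict_unitCube] at hf
  set e := MeasurableEquiv.piFinSuccAbove (fun _ => ℝ) (Fin.last n)
  have he := measurePreserving_piFinSuccAbove (fun _ => volume.restrict (Set.Icc (0:ℝ) 1))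
    (Fin.last n)
  have hf' := (he.symm.integrable_comp_emb e.symm.measurableEmbedding).2 hf
  rw [volume_restrict_unitCube, volume_restrict_unitCube, ← he.symm.integral_comp',
    integral_prod_symm (fun p => f (e.symm p)) hf']
  simp only [e, MeasurableEquiv.piFinSuccAbove_symm_apply, Fin.insertNthEquiv,
    Fin.insertNth_last', Equiv.coe_fn_mk, integral_Icc_eq_integral_Ioc,
    intervalIntegral.integral_of_le zero_le_one]

lemma cosh_mul_le_cosh {p : ℝ} (a : ℝ) (hp : |p| ≤ 1) : cosh (a * p) ≤ cosh a := by
  rw [cosh_le_cosh, abs_mul]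
  exact mul_le_of_le_one_right (abs_nonneg a) hp

lemma integral_cosh_mul {a : ℝ} (ha : a ≠ 0) : ∫ s in (0:ℝ)..1, cosh (a * s) = sinh a / a := by
  have hderiv (s : ℝ) : HasDerivAt (fun s => sinh (a * s) / a) (cosh (a * s)) s := by
    simpa [ha] using (((hasDerivAt_id s).const_mul a).sinh).div_const a
  rw [intervalIntegral.integral_eq_sub_of_hasDerivAt (fun s _ => hderiv s)
    ((by fun_prop : Continuous fun s => cosh (a * s)).intervalIntegrable 0 1)]
  simp

lemma abs_integral_cosh_mul_le {b B : ℝ} (h : |b| ≤ |B|) :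
    |∫ s in (0:ℝ)..1, cosh (b * s)| ≤ cosh B := by
  have h := intervalIntegral.norm_integral_le_of_norm_le_const (a := 0) (b := 1) (C := cosh B)
    (f := fun s => cosh (b * s)) fun s hs => by
      rw [Set.uIoc_of_le zero_le_one] at hs
      rw [norm_eq_abs, abs_of_pos (cosh_pos _)]
      exact (cosh_mul_le_cosh b (abs_le.2 ⟨by linarith [hs.1], hs.2⟩)).trans (cosh_le_cosh.2 h)
  simpa using h

lemma sinhc_eq_integral_cosh {t ϑ : ℝ} (ht : t ≠ 0) (hϑ : 0 ≤ ϑ) :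
    sinhc t ϑ = ∫ s in (0:ℝ)..1, cosh (t * √ϑ * s) := by
  rcases hϑ.eq_or_lt with rfl | hϑ
  · simp [sinhc]
  · rw [sinhc, if_neg hϑ.ne', integral_cosh_mul (by positivity)]

lemma hasDerivAt_cosh_mul_sqrt (c : ℝ) {x : ℝ} (hx : 0 < x) :
    HasDerivAt (fun x => cosh (c * √x)) (c ^ 2 / 2 * ∫ s in (0:ℝ)..1, cosh (c * √x * s)) x := by
  convert ((hasDerivAt_sqrt hx.ne').const_mul c).cosh using 1
  rcases eq_or_ne c 0 with rfl | hc
  · simp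
  · rw [integral_cosh_mul (by positivity)]
    field_simp

def sinhcWeight (k : ℕ) (θ : Fin (k + 1) → ℝ) : ℝ :=
  ∏ j : Fin (k + 1), θ j ^ (2 * (k - (j : ℕ)))

def sinhcIntegral (k : ℕ) (t ϑ : ℝ) : ℝ :=
  ∫ θ in unitCube (k + 1), sinhcWeight k θ * cosh (t * √ϑ * ∏ j, θ j)

lemma sinhcWeight_snoc (k : ℕ) (θ : Fin (k + 1) → ℝ) (s : ℝ) :
    sinhcWeight (k + 1) (Fin.snoc θ s) = sinhcWeight k θ * (∏ j, θ j) ^ 2 := by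
  unfold sinhcWeight
  rw [Fin.prod_univ_castSucc]
  simp only [Fin.snoc_castSucc, Fin.snoc_last, Fin.val_castSucc, Fin.val_last,
    Nat.sub_self, mul_zero, pow_zero, mul_one]
  rw [← Finset.prod_pow, ← Finset.prod_mul_distrib]
  refine Finset.prod_congr rfl fun j _ => ?_
  rw [← pow_add]
  congr 1
  omega

@[fun_prop]
lemma continuous_sinhcWeight (k : ℕ) : Continuous (sinhcWeight k) := by
  unfold sinhcWeight
  fun_prop

lemma abs_sinhcWeight_le_one {k : ℕ} {θ : Fin (k + 1) → ℝ} (hθ : θ ∈ unitCube (k + 1)) :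
    |sinhcWeight k θ| ≤ 1 :=
  abs_prod_pow_le_one hθ _

lemma sinhcIntegral_zero {t ϑ : ℝ} (ht : t ≠ 0) (hϑ : 0 ≤ ϑ) :
    sinhcIntegral 0 t ϑ = sinhc t ϑ := by
  rw [sinhcIntegral, integral_unitCube_succ (Continuous.integrableOn_unitCube (by fun_prop)),
    sinhc_eq_integral_cosh ht hϑ]
  simp only [sinhcWeight, Fin.prod_snoc]
  simp

lemma sinhcIntegral_succ (k : ℕ) (t ϑ : ℝ) :
    sinhcIntegral (k + 1) t ϑ = ∫ θ in unitCube (k + 1),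
      sinhcWeight k θ * (∏ j, θ j) ^ 2 * ∫ s in (0:ℝ)..1, cosh (t * √ϑ * (∏ j, θ j) * s) := by
  rw [sinhcIntegral, integral_unitCube_succ (Continuous.integrableOn_unitCube (by fun_prop))]
  simp only [sinhcWeight_snoc, Fin.prod_snoc, ← intervalIntegral.integral_const_mul, mul_assoc]

lemma continuous_sinhcIntegral (k : ℕ) (t : ℝ) : Continuous (sinhcIntegral k t) :=
  continuous_parametric_integral_of_continuous
    (f := fun ϑ θ => sinhcWeight k θ * cosh (t * √ϑ * ∏ j, θ j)) (by fun_prop)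
    (isCompact_unitCube _)

lemma abs_sinhcWeight_mul_deriv_le {k : ℕ} {θ : Fin (k + 1) → ℝ} (hθ : θ ∈ unitCube (k + 1))
    (t : ℝ) {x R : ℝ} (hxR : x ≤ R) :
    |sinhcWeight k θ * ((t * ∏ j, θ j) ^ 2 / 2 *
      ∫ s in (0:ℝ)..1, cosh (t * (∏ j, θ j) * √x * s))| ≤ t ^ 2 / 2 * cosh (t * √R) := by
  have hP := abs_prod_le_one hθ
  have hsq : (t * ∏ j, θ j) ^ 2 ≤ t ^ 2 := by
    rw [mul_pow]
    exact mul_le_of_le_one_right (sq_nonneg t) ((sq_le_one_iff_abs_le_one _).2 hP)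
  have hint : |∫ s in (0:ℝ)..1, cosh (t * (∏ j, θ j) * √x * s)| ≤ cosh (t * √R) := by
    refine abs_integral_cosh_mul_le ?_
    simp only [abs_mul, abs_of_nonneg (sqrt_nonneg _)]
    calc |t| * |∏ j, θ j| * √x ≤ |t| * 1 * √R := by gcongr
      _ = |t| * √R := by rw [mul_one]
  rw [abs_mul, abs_mul, abs_of_nonneg (by positivity : (0:ℝ) ≤ (t * ∏ j, θ j) ^ 2 / 2)]
  calc _ ≤ 1 * (t ^ 2 / 2 * cosh (t * √R)) := by
        gcongr ?_ * (?_ / 2 * ?_)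
        exact abs_sinhcWeight_le_one hθ
    _ = t ^ 2 / 2 * cosh (t * √R) := one_mul _

lemma hasDerivAt_sinhcIntegral (k : ℕ) (t : ℝ) {ϑ : ℝ} (hϑ : 0 < ϑ) :
    HasDerivAt (sinhcIntegral k t) (t ^ 2 / 2 * sinhcIntegral (k + 1) t ϑ) ϑ := by
  set F' : ℝ → (Fin (k + 1) → ℝ) → ℝ := fun x θ => sinhcWeight k θ *
    ((t * ∏ j, θ j) ^ 2 / 2 * ∫ s in (0:ℝ)..1, cosh (t * (∏ j, θ j) * √x * s))
  have h_diff (θ : Fin (k + 1) → ℝ) (x : ℝ) (hx : 0 < x) :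
      HasDerivAt (fun x => sinhcWeight k θ * cosh (t * √x * ∏ j, θ j)) (F' x θ) x := by
    simpa only [mul_right_comm t] using
      (hasDerivAt_cosh_mul_sqrt (t * ∏ j, θ j) hx).const_mul (sinhcWeight k θ)
  have h_deriv := hasDerivAt_integral_of_dominated_loc_of_deriv_le
    (μ := volume.restrict (unitCube (k + 1)))
    (F := fun x θ => sinhcWeight k θ * cosh (t * √x * ∏ j, θ j)) (F' := F')
    (bound := fun _ => t ^ 2 / 2 * cosh (t * √(ϑ + 1))) (Ioo_mem_nhds hϑ (lt_add_one ϑ))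
    (.of_forall fun _ => (Continuous.integrableOn_unitCube (by fun_prop)).aestronglyMeasurable)
    (Continuous.integrableOn_unitCube (by fun_prop))
    (Continuous.integrableOn_unitCube (by fun_prop)).aestronglyMeasurable
    ((ae_restrict_iff' (measurableSet_unitCube _)).2 <| ae_of_all _ fun θ hθ x hx =>
      abs_sinhcWeight_mul_deriv_le hθ t hx.2.le)
    (integrable_const _) (ae_of_all _ fun θ x hx => h_diff θ x hx.1)
  refine h_deriv.2.congr_deriv ?_
  rw [sinhcIntegral_succ, ← integral_const_mul]
  refine integral_congr_ae (ae_of_all _ fun θ => ?_)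
  simp only [F', mul_right_comm t]
  ring

lemma hasDerivWithinAt_sinhcIntegral (k : ℕ) (t : ℝ) {ϑ : ℝ} (hϑ : 0 ≤ ϑ) :
    HasDerivWithinAt (sinhcIntegral k t) (t ^ 2 / 2 * sinhcIntegral (k + 1) t ϑ)
      (Set.Ici 0) ϑ := by
  rcases hϑ.eq_or_lt with rfl | hϑ
  · refine hasDerivWithinAt_Ici_of_tendsto_deriv
      (fun x hx => (hasDerivAt_sinhcIntegral k t hx).differentiableAt.differentiableWithinAt)
      (continuous_sinhcIntegral k t).continuousWithinAt self_mem_nhdsWithin ?_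
    refine ((continuous_sinhcIntegral (k + 1) t).tendsto 0 |>.const_mul (t ^ 2 / 2)
      |>.mono_left nhdsWithin_le_nhds).congr' ?_
    filter_upwards [self_mem_nhdsWithin] with x hx
    exact (hasDerivAt_sinhcIntegral k t hx).deriv.symm
  · exact (hasDerivAt_sinhcIntegral k t hϑ).hasDerivWithinAt

lemma abs_sinhcIntegral_le (k : ℕ) (t ϑ : ℝ) : |sinhcIntegral k t ϑ| ≤ cosh (t * √ϑ) := by
  have h := norm_integral_le_of_norm_le_const (μ := volume.restrict (unitCube (k + 1)))
    (C := cosh (t * √ϑ)) (f := fun θ => sinhcWeight k θ * cosh (t * √ϑ * ∏ j, θ j))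
    ((ae_restrict_iff' (measurableSet_unitCube _)).2 (ae_of_all _ fun θ hθ => by
      rw [norm_eq_abs, abs_mul, abs_of_pos (cosh_pos _)]
      exact (mul_le_of_le_one_left (cosh_pos _).le (abs_sinhcWeight_le_one hθ)).trans
        (cosh_mul_le_cosh _ (abs_prod_le_one hθ))))
  simpa [sinhcIntegral] using h

lemma iteratedDerivWithin_sinhc {t : ℝ} (ht : t ≠ 0) (k : ℕ) {ϑ : ℝ} (hϑ : 0 ≤ ϑ) :
    iteratedDerivWithin k (sinhc t) (Set.Ici 0) ϑ = (t ^ 2 / 2) ^ k * sinhcIntegral k t ϑ := by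
  rw [iteratedDerivWithin_congr (s := Set.Ici 0) (g := sinhcIntegral 0 t)
    (fun x hx => (sinhcIntegral_zero ht hx).symm) hϑ]
  exact iteratedDerivWithin_eq_pow_smul_of_hasDerivWithinAt (uniqueDiffOn_Ici 0) (t ^ 2 / 2)
    (fun k x hx => hasDerivWithinAt_sinhcIntegral k t hx) k ϑ hϑ

/-- For every integer `k ≥ 0`, the identity
`d^k/dϑ^k (sinh(t√ϑ)/(t√ϑ)) = 2^{-k} t^{2k} ∫_{θ∈[0,1]^{k+1}} (∏ θ_j^{2(k-j)}) cosh(t√ϑ ∏ θ_j) dθ`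
holds for all `ϑ ≥ 0`, `t > 0` (derivatives taken within `[0,∞)`); consequently for
`ϑ ≥ 0`, `0 < t < 1` the bound `|d^k/dϑ^k (sinh(t√ϑ)/(t√ϑ))| ≤ 2^{1-k} e^{t√ϑ}` holds. -/
theorem sinhc_iteratedDeriv_eq_and_bound (k : ℕ) :
    (∀ (t : ℝ), 0 < t → ∀ (ϑ : ℝ), 0 ≤ ϑ →
      iteratedDerivWithin k (sinhc t) (Set.Ici (0:ℝ)) ϑ =
        (2:ℝ) ^ (-(k:ℤ)) * t ^ (2 * k) *
          ∫ θ : Fin (k + 1) → ℝ in Set.univ.pi (fun _ => Set.Icc (0:ℝ) 1),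
            (∏ j : Fin (k + 1), θ j ^ (2 * (k - (j : ℕ)))) *
              Real.cosh (t * Real.sqrt ϑ * ∏ j : Fin (k + 1), θ j)) ∧
    (∀ (t : ℝ), 0 < t → t < 1 → ∀ (ϑ : ℝ), 0 ≤ ϑ →
      |iteratedDerivWithin k (sinhc t) (Set.Ici (0:ℝ)) ϑ| ≤
        (2:ℝ) ^ ((1:ℤ) - (k:ℤ)) * Real.exp (t * Real.sqrt ϑ)) := by
  have hcoeff (t : ℝ) : (t ^ 2 / 2) ^ k = (2:ℝ) ^ (-(k:ℤ)) * t ^ (2 * k) := by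
    rw [div_pow, ← pow_mul, zpow_neg, zpow_natCast, div_eq_inv_mul]
  refine ⟨fun t ht ϑ hϑ => by rw [iteratedDerivWithin_sinhc ht.ne' k hϑ, hcoeff]; rfl,
    fun t ht ht1 ϑ hϑ => ?_⟩
  have hx : 0 ≤ t * √ϑ := by positivity
  have hcosh : cosh (t * √ϑ) ≤ exp (t * √ϑ) := by
    rw [cosh_eq]
    linarith [exp_le_exp.2 (neg_le_self hx)]
  calc |iteratedDerivWithin k (sinhc t) (Set.Ici 0) ϑ|
      = (2:ℝ) ^ (-(k:ℤ)) * t ^ (2 * k) * |sinhcIntegral k t ϑ| := by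
        rw [iteratedDerivWithin_sinhc ht.ne' k hϑ, hcoeff, abs_mul, abs_of_pos (by positivity)]
    _ ≤ (2:ℝ) ^ (-(k:ℤ)) * 1 * exp (t * √ϑ) := by
        gcongr
        · exact pow_le_one₀ ht.le ht1.le
        · exact (abs_sinhcIntegral_le k t ϑ).trans hcosh
    _ ≤ (2:ℝ) ^ ((1:ℤ) - (k:ℤ)) * exp (t * √ϑ) := by
        rw [mul_one, sub_eq_add_neg, zpow_add₀ two_ne_zero, zpow_one]
        gcongr
        exact le_mul_of_one_le_left (by positivity) one_le_two
end
end
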